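/- Let f, g ∈ ℂ[[t,z]] with g(0,0) ≠ 0 and f(0,0) = 0, and suppose λ := (∂f/∂z)(0,0)/g(0,0) is a positive integer. Let Σ be the set of z ∈ ℂ[[t]] with zero constant term satisfying g(t, z(t))·t·z'(t) = f(t, z(t)). Then: (i) any two elements z1, z2 ∈ Σ have coeff_i(z1) = coeff_i(z2) for all 1 ≤ i ≤ λ−1; (ii) if z1, z2 ∈ Σ and coeff_λ(z1) = coeff_λ(z2), then z1 = z2; (iii) if Σ is nonempty, then for every ζ ∈ ℂ there is exactly one z ∈ Σ with coeff_λ(z) = ζ. -/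

import Mathlib

/-- The coefficient `f_{i,j}` of `t^i z^j` in a two-variable formal power series,
where variable `0` is `t` and variable `1` is `z`. -/
noncomputable def fcoeff (f : MvPowerSeries (Fin 2) ℂ) (i j : ℕ) : ℂ :=
  MvPowerSeries.coeff (Finsupp.single 0 i + Finsupp.single 1 j) f

/-- Substitution `f(t, z(t))` (intended for `z` with zero constant term, in which
case `coeff n (X^i * z^j) = 0` for `i + j > n`). -/
noncomputable def subst2 (f : MvPowerSeries (Fin 2) ℂ) (z : PowerSeries ℂ) : PowerSeries ℂ :=
  PowerSeries.mk fun n => ∑ i ∈ Finset.range (n + 1), ∑ j ∈ Finset.range (n + 1),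
    fcoeff f i j * (PowerSeries.coeff n) (PowerSeries.X ^ i * z ^ j)

/-!
Compare the coefficients of `t^n` in the equation for two solutions with zero constant term that
agree below order `n`. Every term cancels except the linear one, leaving
`(n·g(0,0) - f_z(0,0))·(a_n - b_n) = (n - λ)·g(0,0)·(a_n - b_n)`. So for `n ≠ λ` the `n`-th
coefficient of a solution is forced by the lower ones, while the `λ`-th is free. A given solution
shows that the order-`λ` equation is solvable, and the higher coefficients are then defined
recursively, each killing the next coefficient of the residual.
-/

open PowerSeries

namespace PowerSeries

variable {R : Type*}

section CommSemiring

variable [CommSemiring R]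

theorem X_pow_succ_dvd_iff {φ : R⟦X⟧} {n : ℕ} :
    X ^ (n + 1) ∣ φ ↔ X ^ n ∣ φ ∧ coeff n φ = 0 := by
  simp only [X_pow_dvd_iff, Nat.lt_succ_iff_lt_or_eq, or_imp, forall_and, forall_eq]

theorem coeff_mul_of_X_pow_dvd (φ : R⟦X⟧) {ψ : R⟦X⟧} {n : ℕ} (h : X ^ n ∣ ψ) :
    coeff n (φ * ψ) = constantCoeff φ * coeff n ψ := by
  obtain ⟨w, rfl⟩ := h
  rw [mul_left_comm, coeff_X_pow_mul', if_pos le_rfl, coeff_X_pow_mul', if_pos le_rfl,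
    Nat.sub_self, coeff_zero_eq_constantCoeff, map_mul]

theorem coeff_X_mul_derivative (φ : R⟦X⟧) (n : ℕ) :
    coeff n (X * d⁄dX R φ) = n * coeff n φ := by
  cases n with
  | zero => simp
  | succ n => rw [coeff_succ_X_mul, coeff_derivative, mul_comm]; push_cast; rfl

theorem X_pow_dvd_X_mul_derivative {φ : R⟦X⟧} {n : ℕ} (h : X ^ n ∣ φ) :
    X ^ n ∣ X * d⁄dX R φ :=
  X_pow_dvd_iff.mpr fun m hm => by
    rw [coeff_X_mul_derivative, X_pow_dvd_iff.mp h m hm, mul_zero]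

theorem exists_coeff_eq_apply_trunc (next : ℕ → Polynomial R → R) :
    ∃ φ : R⟦X⟧, ∀ n, coeff n φ = next n (trunc n φ) := by
  let approx : ℕ → Polynomial R := fun n =>
    Nat.rec 0 (fun k p => p + Polynomial.monomial k (next k p)) n
  refine ⟨mk fun n => next n (approx n), fun n => ?_⟩
  suffices trunc n (mk fun n => next n (approx n)) = approx n by rw [this, coeff_mk]
  induction n with
  | zero => rfl
  | succ n ih => rw [trunc_succ, ih, coeff_mk]

end CommSemiring

section CommRing

variable [CommRing R]

theorem X_pow_dvd_sub_trunc (φ : R⟦X⟧) (n : ℕ) : X ^ n ∣ φ - (trunc n φ : R⟦X⟧) :=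
  X_pow_dvd_iff.mpr fun _ hm => by rw [map_sub, coeff_coe_trunc_of_lt hm, sub_self]

theorem X_pow_succ_dvd_pow_sub_pow {φ ψ : R⟦X⟧} {n : ℕ} (hφ : X ∣ φ) (hψ : X ∣ ψ)
    (h : X ^ n ∣ φ - ψ) {j : ℕ} (hj : 2 ≤ j) : X ^ (n + 1) ∣ φ ^ j - ψ ^ j := by
  obtain ⟨k, rfl⟩ : ∃ k, j = k + 2 := ⟨j - 2, by omega⟩
  have hsplit : φ ^ (k + 2) - ψ ^ (k + 2)
      = φ ^ (k + 1) * (φ - ψ) + ψ * (φ ^ (k + 1) - ψ ^ (k + 1)) := by ring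
  rw [hsplit, pow_succ']
  exact dvd_add (mul_dvd_mul (dvd_pow hφ k.succ_ne_zero) h)
    (mul_dvd_mul hψ (h.trans (sub_dvd_pow_sub_pow _ _ _)))

theorem coeff_X_pow_mul_pow_sub_pow {φ ψ : R⟦X⟧} (hφ : X ∣ φ) (hψ : X ∣ ψ) {n : ℕ}
    (h : X ^ n ∣ φ - ψ) {i j : ℕ} (hij : (i, j) ≠ (0, 1)) :
    coeff n (X ^ i * (φ ^ j - ψ ^ j)) = 0 := by
  suffices X ^ (n + 1) ∣ X ^ i * (φ ^ j - ψ ^ j) from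
    X_pow_dvd_iff.mp this n n.lt_succ_self
  rcases Nat.eq_zero_or_pos i with rfl | hi
  · rcases Nat.lt_or_ge j 2 with hj | hj
    · obtain rfl : j = 0 := by grind
      simp
    · rw [pow_zero, one_mul]
      exact X_pow_succ_dvd_pow_sub_pow hφ hψ h hj
  · rw [pow_succ, mul_comm (X ^ i)]
    exact mul_dvd_mul (h.trans (sub_dvd_pow_sub_pow φ ψ j)) (dvd_pow_self X hi.ne')

end CommRing

end PowerSeries

namespace BriotBouquet

variable (f g : MvPowerSeries (Fin 2) ℂ)

noncomputable def residual (z : ℂ⟦X⟧) : ℂ⟦X⟧ :=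
  subst2 g z * (X * d⁄dX ℂ z) - subst2 f z

def IsSolution (z : ℂ⟦X⟧) : Prop :=
  constantCoeff z = 0 ∧ subst2 g z * (X * d⁄dX ℂ z) = subst2 f z

theorem constantCoeff_subst2 (z : ℂ⟦X⟧) : constantCoeff (subst2 f z) = fcoeff f 0 0 := by
  rw [← coeff_zero_eq_constantCoeff_apply]
  simp [subst2]

theorem coeff_subst2_sub_coeff_subst2 (z₁ z₂ : ℂ⟦X⟧) (n : ℕ) :
    coeff n (subst2 f z₁) - coeff n (subst2 f z₂) = ∑ i ∈ Finset.range (n + 1),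
      ∑ j ∈ Finset.range (n + 1), fcoeff f i j * coeff n (X ^ i * (z₁ ^ j - z₂ ^ j)) := by
  simp only [subst2, coeff_mk, ← Finset.sum_sub_distrib, mul_sub, map_sub]

theorem X_pow_dvd_subst2_sub {z₁ z₂ : ℂ⟦X⟧} {n : ℕ} (h : X ^ n ∣ z₁ - z₂) :
    X ^ n ∣ subst2 f z₁ - subst2 f z₂ :=
  X_pow_dvd_iff.mpr fun m hm => by
    rw [map_sub, coeff_subst2_sub_coeff_subst2]
    refine Finset.sum_eq_zero fun i _ => Finset.sum_eq_zero fun j _ => ?_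
    have hdvd : X ^ n ∣ X ^ i * (z₁ ^ j - z₂ ^ j) :=
      dvd_mul_of_dvd_right (h.trans (sub_dvd_pow_sub_pow _ _ _)) _
    rw [X_pow_dvd_iff.mp hdvd m hm, mul_zero]

theorem coeff_subst2_sub_of_X_pow_dvd {z₁ z₂ : ℂ⟦X⟧} (hz₁ : constantCoeff z₁ = 0)
    (hz₂ : constantCoeff z₂ = 0) {n : ℕ} (h : X ^ n ∣ z₁ - z₂) :
    coeff n (subst2 f z₁) - coeff n (subst2 f z₂) = fcoeff f 0 1 * (coeff n z₁ - coeff n z₂) := by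
  have hterm : ∀ i j, (i, j) ≠ (0, 1) → fcoeff f i j * coeff n (X ^ i * (z₁ ^ j - z₂ ^ j)) = 0 :=
    fun i j hij => by
      rw [coeff_X_pow_mul_pow_sub_pow (X_dvd_iff.mpr hz₁) (X_dvd_iff.mpr hz₂) h hij, mul_zero]
  rw [coeff_subst2_sub_coeff_subst2,
    Finset.sum_eq_single_of_mem 0 (by simp) fun i _ hi =>
      Finset.sum_eq_zero fun j _ => hterm i j (by simp [hi]),
    Finset.sum_eq_single 1 (fun j _ hj => hterm 0 j (by simp [hj])) fun h1 => by
      obtain rfl : n = 0 := by simpa using h1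
      simp [hz₁, hz₂]]
  simp

theorem coeff_residual_sub {z₁ z₂ : ℂ⟦X⟧} (hz₁ : constantCoeff z₁ = 0)
    (hz₂ : constantCoeff z₂ = 0) {n : ℕ} (h : X ^ n ∣ z₁ - z₂) :
    coeff n (residual f g z₁) - coeff n (residual f g z₂)
      = (n * fcoeff g 0 0 - fcoeff f 0 1) * (coeff n z₁ - coeff n z₂) := by
  set D₁ := X * d⁄dX ℂ z₁
  set D₂ := X * d⁄dX ℂ z₂
  have hsplit : subst2 g z₁ * D₁ - subst2 g z₂ * D₂
      = D₁ * (subst2 g z₁ - subst2 g z₂) + subst2 g z₂ * (D₁ - D₂) := by ring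
  have hfirst : coeff n (D₁ * (subst2 g z₁ - subst2 g z₂)) = 0 := by
    have : X ^ (n + 1) ∣ D₁ * (subst2 g z₁ - subst2 g z₂) := by
      rw [pow_succ']; exact mul_dvd_mul (dvd_mul_right X _) (X_pow_dvd_subst2_sub g h)
    exact X_pow_dvd_iff.mp this n n.lt_succ_self
  have hsecond : coeff n (subst2 g z₂ * (D₁ - D₂)) = fcoeff g 0 0 * (n * coeff n (z₁ - z₂)) := by
    have hD : D₁ - D₂ = X * d⁄dX ℂ (z₁ - z₂) := by simp only [D₁, D₂, map_sub, mul_sub]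
    rw [hD, coeff_mul_of_X_pow_dvd _ (X_pow_dvd_X_mul_derivative h), coeff_X_mul_derivative,
      constantCoeff_subst2]
  have hgside : coeff n (subst2 g z₁ * D₁) - coeff n (subst2 g z₂ * D₂)
      = n * fcoeff g 0 0 * (coeff n z₁ - coeff n z₂) := by
    rw [← map_sub, hsplit, map_add, hfirst, hsecond, map_sub]; ring
  simp only [residual, map_sub]
  linear_combination hgside - coeff_subst2_sub_of_X_pow_dvd f hz₁ hz₂ h

variable {f g}

theorem IsSolution.residual_eq_zero {z : ℂ⟦X⟧} (hz : IsSolution f g z) : residual f g z = 0 :=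
  sub_eq_zero.mpr hz.2

theorem X_pow_succ_dvd_sub_of_ne {lam : ℕ} (hg : fcoeff g 0 0 ≠ 0)
    (hf : fcoeff f 0 1 = lam * fcoeff g 0 0) {z₁ z₂ : ℂ⟦X⟧} (h₁ : IsSolution f g z₁)
    (h₂ : IsSolution f g z₂) {n : ℕ} (h : X ^ n ∣ z₁ - z₂) (hn : n ≠ lam) :
    X ^ (n + 1) ∣ z₁ - z₂ := by
  have key := coeff_residual_sub f g h₁.1 h₂.1 h
  rw [h₁.residual_eq_zero, h₂.residual_eq_zero, hf, ← sub_mul, sub_self] at key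
  have hfactor : ((n : ℂ) - lam) * fcoeff g 0 0 ≠ 0 :=
    mul_ne_zero (sub_ne_zero.mpr (Nat.cast_injective.ne hn)) hg
  exact X_pow_succ_dvd_iff.mpr ⟨h, by
    rw [map_sub]; exact (mul_eq_zero.mp key.symm).resolve_left hfactor⟩

theorem X_pow_dvd_sub_of_le {lam : ℕ} (hg : fcoeff g 0 0 ≠ 0)
    (hf : fcoeff f 0 1 = lam * fcoeff g 0 0) {z₁ z₂ : ℂ⟦X⟧} (h₁ : IsSolution f g z₁)
    (h₂ : IsSolution f g z₂) {n : ℕ} (hn : n ≤ lam) : X ^ n ∣ z₁ - z₂ := by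
  induction n with
  | zero => simp
  | succ n ih => exact X_pow_succ_dvd_sub_of_ne hg hf h₁ h₂ (ih (by omega)) (by omega)

theorem coeff_eq_of_lt {lam : ℕ} (hg : fcoeff g 0 0 ≠ 0)
    (hf : fcoeff f 0 1 = lam * fcoeff g 0 0) {z₁ z₂ : ℂ⟦X⟧} (h₁ : IsSolution f g z₁)
    (h₂ : IsSolution f g z₂) {i : ℕ} (hi : i < lam) : coeff i z₁ = coeff i z₂ :=
  sub_eq_zero.mp <| by
    rw [← map_sub]; exact X_pow_dvd_iff.mp (X_pow_dvd_sub_of_le hg hf h₁ h₂ le_rfl) i hi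

theorem eq_of_coeff_eq {lam : ℕ} (hg : fcoeff g 0 0 ≠ 0)
    (hf : fcoeff f 0 1 = lam * fcoeff g 0 0) {z₁ z₂ : ℂ⟦X⟧} (h₁ : IsSolution f g z₁)
    (h₂ : IsSolution f g z₂) (hlam : coeff lam z₁ = coeff lam z₂) : z₁ = z₂ := by
  have hdvd : ∀ n, X ^ n ∣ z₁ - z₂ := by
    intro n
    induction n with
    | zero => simp
    | succ n ih =>
      rcases eq_or_ne n lam with rfl | hn
      · exact X_pow_succ_dvd_iff.mpr ⟨ih, by rw [map_sub, hlam, sub_self]⟩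
      · exact X_pow_succ_dvd_sub_of_ne hg hf h₁ h₂ ih hn
  ext n
  exact sub_eq_zero.mp <| by rw [← map_sub]; exact X_pow_dvd_iff.mp (hdvd (n + 1)) n n.lt_succ_self

theorem exists_isSolution_coeff_eq {lam : ℕ} (hlam : 1 ≤ lam) (hg : fcoeff g 0 0 ≠ 0)
    (hf : fcoeff f 0 1 = lam * fcoeff g 0 0) {z₀ : ℂ⟦X⟧} (h₀ : IsSolution f g z₀) (ζ : ℂ) :
    ∃ z, IsSolution f g z ∧ coeff lam z = ζ := by
  -- For `n > λ` the truncation has no `n`-th coefficient, so by `coeff_residual_sub` this choice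
  -- kills the `n`-th coefficient of the residual.
  obtain ⟨z, hz⟩ := exists_coeff_eq_apply_trunc fun n (p : Polynomial ℂ) =>
    if n < lam then coeff n z₀ else if n = lam then ζ
    else -coeff n (residual f g p) / ((n - lam) * fcoeff g 0 0)
  have hz0 : constantCoeff z = 0 := by
    rw [← coeff_zero_eq_constantCoeff_apply, hz, if_pos (by omega),
      coeff_zero_eq_constantCoeff_apply, h₀.1]
  have hzlam : coeff lam z = ζ := by simp [hz]
  have hagree : X ^ lam ∣ z - z₀ :=
    X_pow_dvd_iff.mpr fun m hm => by rw [map_sub, hz, if_pos hm, sub_self]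
  have hres : ∀ n, coeff n (residual f g z) = 0 := by
    intro n
    rcases le_or_gt n lam with hn | hn
    · have key := coeff_residual_sub f g hz0 h₀.1 ((pow_dvd_pow X hn).trans hagree)
      rw [h₀.residual_eq_zero, map_zero, sub_zero, hf, ← sub_mul] at key
      rw [key]
      rcases hn.lt_or_eq with hn | rfl
      · rw [hz n, if_pos hn, sub_self, mul_zero]
      · simp
    · have htrunc0 : constantCoeff (trunc n z : ℂ⟦X⟧) = 0 := by
        rw [← coeff_zero_eq_constantCoeff_apply, coeff_coe_trunc_of_lt (by omega),
          coeff_zero_eq_constantCoeff_apply, hz0]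
      have hfactor : ((n : ℂ) - lam) * fcoeff g 0 0 ≠ 0 :=
        mul_ne_zero (sub_ne_zero.mpr (Nat.cast_injective.ne hn.ne')) hg
      have key := coeff_residual_sub f g hz0 htrunc0 (X_pow_dvd_sub_trunc z n)
      rw [Polynomial.coeff_coe, coeff_trunc, if_neg n.lt_irrefl, sub_zero, hz n,
        if_neg (by omega), if_neg (by omega), hf, ← sub_mul, mul_div_cancel₀ _ hfactor] at key
      linear_combination key
  have hresidual : residual f g z = 0 := ext fun n => by rw [hres, map_zero]
  exact ⟨z, ⟨hz0, sub_eq_zero.mp hresidual⟩, hzlam⟩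

end BriotBouquet

theorem briot_bouquet_resonant_case_general
    (f g : MvPowerSeries (Fin 2) ℂ)
    (hg : fcoeff g 0 0 ≠ 0)
    (lam : ℕ) (hlam : 1 ≤ lam)
    (hlambda : fcoeff f 0 1 / fcoeff g 0 0 = (lam : ℂ)) :
    (∀ z₁ z₂ : PowerSeries ℂ,
      PowerSeries.constantCoeff z₁ = 0 →
        subst2 g z₁ * (PowerSeries.X * z₁.derivativeFun) = subst2 f z₁ →
      PowerSeries.constantCoeff z₂ = 0 →
        subst2 g z₂ * (PowerSeries.X * z₂.derivativeFun) = subst2 f z₂ →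
      ∀ i : ℕ, i < lam → PowerSeries.coeff i z₁ = PowerSeries.coeff i z₂) ∧
    (∀ z₁ z₂ : PowerSeries ℂ,
      PowerSeries.constantCoeff z₁ = 0 →
        subst2 g z₁ * (PowerSeries.X * z₁.derivativeFun) = subst2 f z₁ →
      PowerSeries.constantCoeff z₂ = 0 →
        subst2 g z₂ * (PowerSeries.X * z₂.derivativeFun) = subst2 f z₂ →
      PowerSeries.coeff lam z₁ = PowerSeries.coeff lam z₂ → z₁ = z₂) ∧
    ((∃ z : PowerSeries ℂ, PowerSeries.constantCoeff z = 0 ∧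
        subst2 g z * (PowerSeries.X * z.derivativeFun) = subst2 f z) →
      ∀ ζ : ℂ, ∃! z : PowerSeries ℂ, (PowerSeries.constantCoeff z = 0 ∧
        subst2 g z * (PowerSeries.X * z.derivativeFun) = subst2 f z) ∧
        PowerSeries.coeff lam z = ζ) := by
  open BriotBouquet in
  have hf : fcoeff f 0 1 = lam * fcoeff g 0 0 := (div_eq_iff hg).mp hlambda
  refine ⟨fun z₁ z₂ h₁ e₁ h₂ e₂ _ hi => coeff_eq_of_lt hg hf ⟨h₁, e₁⟩ ⟨h₂, e₂⟩ hi,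
    fun z₁ z₂ h₁ e₁ h₂ e₂ => eq_of_coeff_eq hg hf ⟨h₁, e₁⟩ ⟨h₂, e₂⟩, ?_⟩
  rintro ⟨z₀, h₀⟩ ζ
  obtain ⟨z, hz, hzζ⟩ := exists_isSolution_coeff_eq hlam hg hf h₀ ζ
  exact ⟨z, ⟨hz, hzζ⟩, fun y ⟨hy, hyζ⟩ => eq_of_coeff_eq hg hf hy hz (hyζ.trans hzζ.symm)⟩

/-- Briot–Bouquet, resonant case: suppose `g(0,0) ≠ 0`, `f(0,0) = 0` and
`λ = f_{0,1}/g_{0,0}` is a positive integer. Consider solutions `z` with zero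
constant term of `g(t, z(t)) · t · z'(t) = f(t, z(t))`. Then (i) any two solutions
agree in all coefficients of index `< λ`; (ii) two solutions agreeing in the
coefficient of index `λ` are equal; (iii) if a solution exists, then for every
`ζ ∈ ℂ` there is exactly one solution whose `λ`-th coefficient is `ζ`. -/
theorem briot_bouquet_resonant_case
    (f g : MvPowerSeries (Fin 2) ℂ)
    (hg : fcoeff g 0 0 ≠ 0) (hf : fcoeff f 0 0 = 0)
    (lam : ℕ) (hlam : 1 ≤ lam)
    (hlambda : fcoeff f 0 1 / fcoeff g 0 0 = (lam : ℂ)) :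
    (∀ z₁ z₂ : PowerSeries ℂ,
      PowerSeries.constantCoeff z₁ = 0 →
        subst2 g z₁ * (PowerSeries.X * z₁.derivativeFun) = subst2 f z₁ →
      PowerSeries.constantCoeff z₂ = 0 →
        subst2 g z₂ * (PowerSeries.X * z₂.derivativeFun) = subst2 f z₂ →
      ∀ i : ℕ, i < lam → PowerSeries.coeff i z₁ = PowerSeries.coeff i z₂) ∧
    (∀ z₁ z₂ : PowerSeries ℂ,
      PowerSeries.constantCoeff z₁ = 0 →
        subst2 g z₁ * (PowerSeries.X * z₁.derivativeFun) = subst2 f z₁ →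
      PowerSeries.constantCoeff z₂ = 0 →
        subst2 g z₂ * (PowerSeries.X * z₂.derivativeFun) = subst2 f z₂ →
      PowerSeries.coeff lam z₁ = PowerSeries.coeff lam z₂ → z₁ = z₂) ∧
    ((∃ z : PowerSeries ℂ, PowerSeries.constantCoeff z = 0 ∧
        subst2 g z * (PowerSeries.X * z.derivativeFun) = subst2 f z) →
      ∀ ζ : ℂ, ∃! z : PowerSeries ℂ, (PowerSeries.constantCoeff z = 0 ∧
        subst2 g z * (PowerSeries.X * z.derivativeFun) = subst2 f z) ∧
        PowerSeries.coeff lam z = ζ) :=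
  briot_bouquet_resonant_case_general f g hg lam hlam hlambda
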